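/- arXiv:2310.01270 — 2 statements merged into one kernel-verified Lean document; each statement's English description precedes it below -/
import Mathlib

section
/- Let n ≥ 1. Define BBur[n] = { (u,v) ∈ WI[n] × Cay[n] : Des(u) ⊆ Des∘(v) } and Ω[n] = { (u,v) ∈ WI[n] × Cay[n] : Des(u) ⊇ Des(v) }. Then the map θ defined by θ(u,v) = ( ((u^r)^c)*, v^r ) is a bijection from BBur[n] to Ω[n]. Here v^r(i) = v(n+1−i) is the reverse, v^c(i) = max(v)+1−v(i) is the complement, and w* denotes the conjugate of a weakly increasing Cayley permutation w, i.e. the unique weakly increasing Cayley permutation of length n whose descent set is {1,…,n−1} \ Des(w). -/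
namespace CayPaper

/-- A word of length `n` (1-indexed): it vanishes outside `{1,…,n}`. -/
def IsWord (n : ℕ) (v : ℕ → ℕ) : Prop := ∀ i, i ∉ Set.Icc 1 n → v i = 0

/-- A Cayley permutation of length `n`: a word on `{1,…,n}` whose image is `{1,…,k}`
for some `k ≤ n`. -/
def IsCayley (n : ℕ) (v : ℕ → ℕ) : Prop :=
  IsWord n v ∧ ∃ k, v '' Set.Icc 1 n = Set.Icc 1 k

/-- A weakly increasing Cayley permutation of length `n`. -/
def IsWI (n : ℕ) (v : ℕ → ℕ) : Prop :=
  IsCayley n v ∧ MonotoneOn v (Set.Icc 1 n)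

/-- A permutation of `{1,…,n}`, encoded as a word. -/
def IsPermWord (n : ℕ) (v : ℕ → ℕ) : Prop :=
  IsWord n v ∧ Set.BijOn v (Set.Icc 1 n) (Set.Icc 1 n)

/-- The weak descent set `Des(v) = { i ∈ {1,…,n−1} : v(i) ≥ v(i+1) }`. -/
def desSet (n : ℕ) (v : ℕ → ℕ) : Finset ℕ :=
  (Finset.Icc 1 (n - 1)).filter fun i => v (i + 1) ≤ v i

/-- The strict descent set `Des∘(v) = { i : v(i) > v(i+1) }`. -/
def sdesSet (n : ℕ) (v : ℕ → ℕ) : Finset ℕ :=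
  (Finset.Icc 1 (n - 1)).filter fun i => v (i + 1) < v i

/-- The weak ascent set `Asc(v) = { i : v(i) ≤ v(i+1) }`. -/
def ascSet (n : ℕ) (v : ℕ → ℕ) : Finset ℕ :=
  (Finset.Icc 1 (n - 1)).filter fun i => v i ≤ v (i + 1)

/-- The strict ascent set `Asc∘(v) = { i : v(i) < v(i+1) }`. -/
def sascSet (n : ℕ) (v : ℕ → ℕ) : Finset ℕ :=
  (Finset.Icc 1 (n - 1)).filter fun i => v i < v (i + 1)

def des (n : ℕ) (v : ℕ → ℕ) : ℕ := (desSet n v).card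
def sdes (n : ℕ) (v : ℕ → ℕ) : ℕ := (sdesSet n v).card
def asc (n : ℕ) (v : ℕ → ℕ) : ℕ := (ascSet n v).card
def sasc (n : ℕ) (v : ℕ → ℕ) : ℕ := (sascSet n v).card

/-- The maximum value of a word. -/
def wmax (n : ℕ) (v : ℕ → ℕ) : ℕ := (Finset.Icc 1 n).sup v

/-- Reverse: `v^r(i) = v(n+1−i)`. -/
def wrev (n : ℕ) (v : ℕ → ℕ) : ℕ → ℕ := fun i =>
  if 1 ≤ i ∧ i ≤ n then v (n + 1 - i) else 0

/-- Complement: `v^c(i) = max(v)+1−v(i)`. -/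
def wcomp (n : ℕ) (v : ℕ → ℕ) : ℕ → ℕ := fun i =>
  if 1 ≤ i ∧ i ≤ n then wmax n v + 1 - v i else 0

/-- The word `(σ(1), …, σ(n))` (1-indexed) of a permutation `σ` of `Fin n`. -/
def permWord (n : ℕ) (σ : Equiv.Perm (Fin n)) : ℕ → ℕ := fun i =>
  if h : 1 ≤ i ∧ i ≤ n then ((σ ⟨i - 1, by omega⟩ : Fin n) : ℕ) + 1 else 0

/-- The conjugate of `u`: the unique weakly increasing Cayley permutation of
length `n` whose descent set is `{1,…,n−1} \ Des(u)`. -/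
noncomputable def conjWI (n : ℕ) (u : ℕ → ℕ) : ℕ → ℕ :=
  haveI := Classical.dec (∃ w, IsWI n w ∧ desSet n w = Finset.Icc 1 (n - 1) \ desSet n u)
  if h : ∃ w, IsWI n w ∧ desSet n w = Finset.Icc 1 (n - 1) \ desSet n u
    then h.choose else fun _ => 0

/-- A Burge matrix: every row and every column contains a nonzero entry. -/
def IsBurge {p q : ℕ} (M : Matrix (Fin p) (Fin q) ℕ) : Prop :=
  (∀ i, ∃ j, M i j ≠ 0) ∧ (∀ j, ∃ i, M i j ≠ 0)

/-- The size of a matrix with natural entries: the sum of its entries. -/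
def matSize {p q : ℕ} (M : Matrix (Fin p) (Fin q) ℕ) : ℕ := ∑ i, ∑ j, M i j

/-- Burge matrices of size `n` (of all dimensions). -/
def BurgeMatrices (n : ℕ) : Set (Σ p : ℕ, Σ q : ℕ, Matrix (Fin p) (Fin q) ℕ) :=
  {M | IsBurge M.2.2 ∧ matSize M.2.2 = n}

/-- Binary Burge matrices of size `n`. -/
def BinaryBurgeMatrices (n : ℕ) : Set (Σ p : ℕ, Σ q : ℕ, Matrix (Fin p) (Fin q) ℕ) :=
  {M | M ∈ BurgeMatrices n ∧ ∀ i j, M.2.2 i j ≤ 1}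

/-- Burge matrices of size `n` whose every column sums to `1`. -/
def ColSumOneBurgeMatrices (n : ℕ) : Set (Σ p : ℕ, Σ q : ℕ, Matrix (Fin p) (Fin q) ℕ) :=
  {M | M ∈ BurgeMatrices n ∧ ∀ j, ∑ i, M.2.2 i j = 1}

/-- Burge words: pairs `(u,v) ∈ WI[n] × Cay[n]` with `Des(u) ⊆ Des(v)`. -/
def BurPairs (n : ℕ) : Set ((ℕ → ℕ) × (ℕ → ℕ)) :=
  {p | IsWI n p.1 ∧ IsCayley n p.2 ∧ desSet n p.1 ⊆ desSet n p.2}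

/-- Pairs `(u,v) ∈ WI[n] × Cay[n]` with `Des(u) ⊆ Des∘(v)`. -/
def BBurPairs (n : ℕ) : Set ((ℕ → ℕ) × (ℕ → ℕ)) :=
  {p | IsWI n p.1 ∧ IsCayley n p.2 ∧ desSet n p.1 ⊆ sdesSet n p.2}

/-- Pairs `(u,v) ∈ WI[n] × S_n` with `Des(u) ⊆ Des(v)`. -/
def PBurPairs (n : ℕ) : Set ((ℕ → ℕ) × (ℕ → ℕ)) :=
  {p | IsWI n p.1 ∧ IsPermWord n p.2 ∧ desSet n p.1 ⊆ desSet n p.2}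

/-- `Ω[n]`: pairs `(u,v) ∈ WI[n] × Cay[n]` with `Des(u) ⊇ Des(v)`. -/
def OmegaPairs (n : ℕ) : Set ((ℕ → ℕ) × (ℕ → ℕ)) :=
  {p | IsWI n p.1 ∧ IsCayley n p.2 ∧ desSet n p.2 ⊆ desSet n p.1}

/-- `v` lists the positions `1,…,n` in the order obtained by sorting the columns
`(x_i, i)` so that first components are weakly increasing, ties broken by strictly
decreasing second components.  For a permutation word `v` this says exactly that
`v = Γ(id, x)`, the bottom row of the Burge transpose of `(id, x)`. -/
def sortsColumns (n : ℕ) (x v : ℕ → ℕ) : Prop :=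
  ∀ i ∈ Finset.Icc 1 (n - 1),
    x (v i) < x (v (i + 1)) ∨ (x (v i) = x (v (i + 1)) ∧ v (i + 1) < v i)

/-- The Fishburn basis of a permutation word `v`:
`basis(v) = { x ∈ Cay[n] : Γ(id, x) = v }`. -/
def fishburnBasis (n : ℕ) (v : ℕ → ℕ) : Set (ℕ → ℕ) :=
  {x | IsCayley n x ∧ sortsColumns n x v}

/-- Stanley's `v`-compatibility condition:
`x(v(1)) ≤ ⋯ ≤ x(v(n))` with strict inequality at every ascent of `v`. -/
def VCompatible (n : ℕ) (v x : ℕ → ℕ) : Prop :=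
  (∀ i ∈ Finset.Icc 1 (n - 1), x (v i) ≤ x (v (i + 1))) ∧
    ∀ i ∈ Finset.Icc 1 (n - 1), v i < v (i + 1) → x (v i) < x (v (i + 1))

/-- A map `{1,…,n} → {1,…,m}`, encoded as a word. -/
def IsMapTo (n m : ℕ) (x : ℕ → ℕ) : Prop :=
  IsWord n x ∧ ∀ i ∈ Set.Icc 1 n, x i ∈ Set.Icc 1 m

/-- Weakly increasing maps `{1,…,n} → {1,…,m}`. -/
def WIgen (n m : ℕ) : Set (ℕ → ℕ) :=
  {u | IsMapTo n m u ∧ MonotoneOn u (Set.Icc 1 n)}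


section Aux

lemma mem_desSet' {n : ℕ} {v : ℕ → ℕ} {i : ℕ} :
    i ∈ desSet n v ↔ (1 ≤ i ∧ i ≤ n - 1) ∧ v (i + 1) ≤ v i := by
  unfold desSet
  rw [Finset.mem_filter, Finset.mem_Icc]

lemma mem_sdesSet' {n : ℕ} {v : ℕ → ℕ} {i : ℕ} :
    i ∈ sdesSet n v ↔ (1 ≤ i ∧ i ≤ n - 1) ∧ v (i + 1) < v i := by
  unfold sdesSet
  rw [Finset.mem_filter, Finset.mem_Icc]

lemma desSet_subset_Icc {n : ℕ} {v : ℕ → ℕ} : desSet n v ⊆ Finset.Icc 1 (n - 1) :=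
  Finset.filter_subset _ _

lemma monotoneOn_of_steps {n : ℕ} {w : ℕ → ℕ}
    (h : ∀ i, 1 ≤ i → i ≤ n - 1 → w i ≤ w (i + 1)) :
    MonotoneOn w (Set.Icc 1 n) := by
  intro i hi j hj hij
  simp only [Set.mem_Icc] at hi hj
  obtain ⟨hi1, _⟩ := hi
  have key : ∀ j, i ≤ j → j ≤ n → w i ≤ w j := by
    intro j
    induction j with
    | zero => intro h1 _; omega
    | succ p ih =>
      intro hp hpn
      rcases Nat.lt_or_ge i (p + 1) with hlt | hge
      · have hstep : w p ≤ w (p + 1) := h p (by omega) (by omega)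
        exact le_trans (ih (by omega) (by omega)) hstep
      · have : i = p + 1 := by omega
        subst this; exact le_refl _
  exact key j hij hj.2

lemma wi_steps {n : ℕ} (hn : 1 ≤ n) {w : ℕ → ℕ} (hw : IsWI n w) :
    w 1 = 1 ∧ ∀ i, 1 ≤ i → i ≤ n - 1 → (w (i + 1) = w i ∨ w (i + 1) = w i + 1) := by
  obtain ⟨⟨hword, k, hk⟩, hmono⟩ := hw
  have h1mem : (1 : ℕ) ∈ Set.Icc 1 n := Set.mem_Icc.mpr ⟨le_refl 1, hn⟩
  have hval : ∀ i, 1 ≤ i → i ≤ n → 1 ≤ w i ∧ w i ≤ k := by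
    intro i h1 h2
    have : w i ∈ Set.Icc 1 k := by
      rw [← hk]; exact ⟨i, Set.mem_Icc.mpr ⟨h1, h2⟩, rfl⟩
    exact Set.mem_Icc.mp this
  have hsurj : ∀ m, 1 ≤ m → m ≤ k → ∃ j, 1 ≤ j ∧ j ≤ n ∧ w j = m := by
    intro m h1 h2
    have : m ∈ w '' Set.Icc 1 n := by rw [hk]; exact Set.mem_Icc.mpr ⟨h1, h2⟩
    obtain ⟨j, hj, hjm⟩ := this
    rw [Set.mem_Icc] at hj
    exact ⟨j, hj.1, hj.2, hjm⟩
  have hw1 : w 1 = 1 := by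
    have hk1 : 1 ≤ k := (hval 1 (le_refl 1) hn).1.trans (hval 1 (le_refl 1) hn).2
    obtain ⟨j, hj1, hj2, hjm⟩ := hsurj 1 (le_refl 1) hk1
    have := hmono h1mem (Set.mem_Icc.mpr ⟨hj1, hj2⟩) hj1
    have := (hval 1 (le_refl 1) hn).1
    omega
  refine ⟨hw1, fun i h1 h2 => ?_⟩
  have hle : w i ≤ w (i + 1) :=
    hmono (Set.mem_Icc.mpr ⟨h1, by omega⟩) (Set.mem_Icc.mpr ⟨by omega, by omega⟩) (by omega)
  by_contra hcon
  push_neg at hcon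
  obtain ⟨hc1, hc2⟩ := hcon
  have hbig : w i + 2 ≤ w (i + 1) := by omega
  have hv1 := hval i h1 (by omega)
  have hv2 := hval (i + 1) (by omega) (by omega)
  obtain ⟨j, hj1, hj2, hjm⟩ := hsurj (w i + 1) (by omega) (by omega)
  rcases Nat.lt_or_ge j (i + 1) with hj | hj
  · have := hmono (Set.mem_Icc.mpr ⟨hj1, hj2⟩) (Set.mem_Icc.mpr ⟨h1, by omega⟩) (by omega)
    omega
  · have := hmono (Set.mem_Icc.mpr ⟨by omega, by omega⟩) (Set.mem_Icc.mpr ⟨hj1, hj2⟩) hj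
    omega

lemma wi_unique {n : ℕ} (hn : 1 ≤ n) {w w' : ℕ → ℕ} (hw : IsWI n w) (hw' : IsWI n w')
    (hdes : desSet n w = desSet n w') : w = w' := by
  obtain ⟨hw1, hwstep⟩ := wi_steps hn hw
  obtain ⟨hw'1, hw'step⟩ := wi_steps hn hw'
  have key : ∀ i, 1 ≤ i → i ≤ n → w i = w' i := by
    intro i
    induction i with
    | zero => omega
    | succ j ih =>
      intro _ h2
      rcases Nat.eq_zero_or_pos j with hj0 | hj1
      · subst hj0; rw [hw1, hw'1]
      · have hj : j ≤ n - 1 := by omega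
        have hs1 := hwstep j hj1 hj
        have hs2 := hw'step j hj1 hj
        have heq : w j = w' j := ih (by omega) (by omega)
        have hmem : j ∈ desSet n w ↔ j ∈ desSet n w' := by rw [hdes]
        rw [mem_desSet', mem_desSet'] at hmem
        rcases hs1 with h1 | h1 <;> rcases hs2 with h2 | h2 <;> omega
  funext i
  by_cases hi : 1 ≤ i ∧ i ≤ n
  · exact key i hi.1 hi.2
  · have h1 := hw.1.1 i (fun hmem => hi (Set.mem_Icc.mp hmem))
    have h2 := hw'.1.1 i (fun hmem => hi (Set.mem_Icc.mp hmem))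
    rw [h1, h2]

lemma cayley_of_steps {n : ℕ} (hn : 1 ≤ n) {w : ℕ → ℕ} (hword : IsWord n w)
    (h1 : w 1 = 1) (hstep : ∀ i, 1 ≤ i → i ≤ n - 1 → (w (i + 1) = w i ∨ w (i + 1) = w i + 1)) :
    IsWI n w := by
  have hmono : MonotoneOn w (Set.Icc 1 n) :=
    monotoneOn_of_steps (fun i hi1 hin => by rcases hstep i hi1 hin with h | h <;> omega)
  refine ⟨⟨hword, w n, ?_⟩, hmono⟩
  apply Set.Subset.antisymm
  · rintro m ⟨i, hi, rfl⟩
    rw [Set.mem_Icc] at hi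
    rw [Set.mem_Icc]
    constructor
    · have := hmono (Set.mem_Icc.mpr ⟨le_refl 1, hn⟩) (Set.mem_Icc.mpr hi) hi.1
      omega
    · exact hmono (Set.mem_Icc.mpr hi) (Set.mem_Icc.mpr ⟨hn, le_refl n⟩) hi.2
  · intro m hm
    rw [Set.mem_Icc] at hm
    have key : ∀ j, 1 ≤ j → j ≤ n → ∀ m, 1 ≤ m → m ≤ w j → ∃ i, 1 ≤ i ∧ i ≤ j ∧ w i = m := by
      intro j
      induction j with
      | zero => omega
      | succ p ih =>
        intro h1p h2p m hm1 hm2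
        rcases Nat.eq_zero_or_pos p with hp | hp
        · subst hp
          simp only [Nat.zero_add] at hm2
          exact ⟨1, le_refl 1, le_refl 1, by omega⟩
        · rcases hstep p hp (by omega) with hs | hs
          · obtain ⟨i, hi1, hi2, hi3⟩ := ih (by omega) (by omega) m hm1 (by omega)
            exact ⟨i, hi1, by omega, hi3⟩
          · rcases Nat.lt_or_ge (w p) m with hlt | hge
            · exact ⟨p + 1, by omega, le_refl _, by omega⟩
            · obtain ⟨i, hi1, hi2, hi3⟩ := ih (by omega) (by omega) m hm1 hge
              exact ⟨i, hi1, by omega, hi3⟩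
    obtain ⟨i, hi1, hi2, hi3⟩ := key n hn le_rfl m hm.1 hm.2
    exact ⟨i, Set.mem_Icc.mpr ⟨hi1, hi2⟩, hi3⟩

lemma wi_exists {n : ℕ} (hn : 1 ≤ n) (S : Finset ℕ) (hS : S ⊆ Finset.Icc 1 (n - 1)) :
    ∃ w, IsWI n w ∧ desSet n w = S := by
  classical
  set w : ℕ → ℕ := fun i =>
    if 1 ≤ i ∧ i ≤ n then 1 + ((Finset.Ico 1 i).filter (· ∉ S)).card else 0 with hwdef
  have hword : IsWord n w := by
    intro i hi
    rw [Set.mem_Icc] at hi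
    simp only [hwdef]
    rw [if_neg hi]
  have hval : ∀ i, 1 ≤ i → i ≤ n → w i = 1 + ((Finset.Ico 1 i).filter (· ∉ S)).card := by
    intro i h1 h2
    simp only [hwdef]
    rw [if_pos ⟨h1, h2⟩]
  have hw1 : w 1 = 1 := by rw [hval 1 (le_refl 1) hn]; simp
  have hstep : ∀ i, 1 ≤ i → i ≤ n - 1 →
      (i ∈ S → w (i + 1) = w i) ∧ (i ∉ S → w (i + 1) = w i + 1) := by
    intro i h1 h2
    have e1 := hval i h1 (by omega)
    have e2 := hval (i + 1) (by omega) (by omega)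
    have hins : Finset.Ico 1 (i + 1) = insert i (Finset.Ico 1 i) := by
      ext x
      simp only [Finset.mem_Ico, Finset.mem_insert]
      omega
    rw [hins, Finset.filter_insert] at e2
    by_cases hiS : i ∈ S
    · rw [if_neg (by simp [hiS])] at e2
      exact ⟨fun _ => by omega, fun h => absurd hiS h⟩
    · rw [if_pos (by simp [hiS])] at e2
      rw [Finset.card_insert_of_notMem (by simp)] at e2
      exact ⟨fun h => absurd h hiS, fun _ => by omega⟩
  have hwi : IsWI n w :=
    cayley_of_steps hn hword hw1 (fun i h1 h2 => by
      obtain ⟨ha, hb⟩ := hstep i h1 h2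
      by_cases hiS : i ∈ S
      · exact Or.inl (ha hiS)
      · exact Or.inr (hb hiS))
  refine ⟨w, hwi, ?_⟩
  ext j
  rw [mem_desSet']
  constructor
  · rintro ⟨⟨h1, h2⟩, hle⟩
    by_contra hjS
    have := (hstep j h1 h2).2 hjS
    omega
  · intro hjS
    have hj := Finset.mem_Icc.mp (hS hjS)
    exact ⟨hj, by rw [(hstep j hj.1 hj.2).1 hjS]⟩

lemma conjWI_spec {n : ℕ} (hn : 1 ≤ n) (u : ℕ → ℕ) :
    IsWI n (conjWI n u) ∧
      desSet n (conjWI n u) = Finset.Icc 1 (n - 1) \ desSet n u := by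
  have hex : ∃ w, IsWI n w ∧ desSet n w = Finset.Icc 1 (n - 1) \ desSet n u :=
    wi_exists hn _ Finset.sdiff_subset
  rw [conjWI, dif_pos hex]
  exact hex.choose_spec

lemma sdiff_cancel {U A B : Finset ℕ} (hA : A ⊆ U) (hB : B ⊆ U) (h : U \ A = U \ B) :
    A = B := by
  have h2 := congrArg (fun s => U \ s) h
  simpa [Finset.sdiff_sdiff_self_left, Finset.inter_eq_right.mpr hA,
    Finset.inter_eq_right.mpr hB] using h2

lemma wrev_wrev {n : ℕ} {v : ℕ → ℕ} (hv : IsWord n v) : wrev n (wrev n v) = v := by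
  funext i
  by_cases hi : 1 ≤ i ∧ i ≤ n
  · simp only [wrev]
    rw [if_pos hi, if_pos (⟨by omega, by omega⟩ : 1 ≤ n + 1 - i ∧ n + 1 - i ≤ n)]
    congr 1
    omega
  · simp only [wrev]
    rw [if_neg hi]
    exact (hv i (fun hmem => hi (Set.mem_Icc.mp hmem))).symm

lemma wrev_cayley {n : ℕ} {v : ℕ → ℕ} (hv : IsCayley n v) : IsCayley n (wrev n v) := by
  obtain ⟨hword, k, hk⟩ := hv
  have hword' : IsWord n (wrev n v) := by
    intro i hi
    rw [Set.mem_Icc] at hi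
    simp only [wrev]
    rw [if_neg hi]
  have himg : wrev n v '' Set.Icc 1 n = v '' Set.Icc 1 n := by
    ext m
    constructor
    · rintro ⟨i, hi, rfl⟩
      rw [Set.mem_Icc] at hi
      simp only [wrev]
      rw [if_pos hi]
      exact ⟨n + 1 - i, Set.mem_Icc.mpr (by omega), rfl⟩
    · rintro ⟨i, hi, rfl⟩
      rw [Set.mem_Icc] at hi
      refine ⟨n + 1 - i, Set.mem_Icc.mpr (by omega), ?_⟩
      simp only [wrev]
      rw [if_pos (⟨by omega, by omega⟩ : 1 ≤ n + 1 - i ∧ n + 1 - i ≤ n)]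
      congr 1
      omega
  exact ⟨hword', k, by rw [himg]; exact hk⟩

lemma wmax_wrev {n : ℕ} (v : ℕ → ℕ) : wmax n (wrev n v) = wmax n v := by
  unfold wmax
  apply le_antisymm
  · apply Finset.sup_le
    intro i hi
    rw [Finset.mem_Icc] at hi
    simp only [wrev]
    rw [if_pos hi]
    exact Finset.le_sup (Finset.mem_Icc.mpr (by omega))
  · apply Finset.sup_le
    intro i hi
    rw [Finset.mem_Icc] at hi
    have he : v i = wrev n v (n + 1 - i) := by
      simp only [wrev]
      rw [if_pos (⟨by omega, by omega⟩ : 1 ≤ n + 1 - i ∧ n + 1 - i ≤ n)]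
      congr 1
      omega
    rw [he]
    exact Finset.le_sup (Finset.mem_Icc.mpr (by omega))

lemma rev_des {n : ℕ} (hn : 1 ≤ n) {v : ℕ → ℕ} {i : ℕ} (h1 : 1 ≤ i) (h2 : i ≤ n - 1) :
    (i ∈ desSet n (wrev n v) ↔ (n - i) ∉ sdesSet n v) ∧
    (i ∈ sdesSet n (wrev n v) ↔ (n - i) ∉ desSet n v) := by
  have e1 : wrev n v i = v (n + 1 - i) := by
    simp only [wrev]
    rw [if_pos (⟨h1, by omega⟩ : 1 ≤ i ∧ i ≤ n)]
  have e2 : wrev n v (i + 1) = v (n - i) := by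
    simp only [wrev]
    rw [if_pos (⟨by omega, by omega⟩ : 1 ≤ i + 1 ∧ i + 1 ≤ n)]
    congr 1
    omega
  have e3 : n - i + 1 = n + 1 - i := by omega
  constructor
  · rw [mem_desSet', mem_sdesSet', e1, e2, e3]
    constructor
    · rintro ⟨_, h⟩ ⟨_, h'⟩
      omega
    · intro h
      refine ⟨⟨h1, h2⟩, ?_⟩
      by_contra hc
      exact h ⟨⟨by omega, by omega⟩, by omega⟩
  · rw [mem_sdesSet', mem_desSet', e1, e2, e3]
    constructor
    · rintro ⟨_, h⟩ ⟨_, h'⟩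
      omega
    · intro h
      refine ⟨⟨h1, h2⟩, ?_⟩
      by_contra hc
      exact h ⟨⟨by omega, by omega⟩, by omega⟩

lemma comp_rev_wi {n : ℕ} (hn : 1 ≤ n) {u : ℕ → ℕ} (hu : IsWI n u) :
    IsWI n (wcomp n (wrev n u)) ∧
    ∀ i, 1 ≤ i → i ≤ n - 1 →
      (i ∈ desSet n (wcomp n (wrev n u)) ↔ n - i ∈ desSet n u) := by
  set M := wmax n u with hM
  have hval : ∀ i, 1 ≤ i → i ≤ n → 1 ≤ u i ∧ u i ≤ M := by
    obtain ⟨⟨hword, k, hk⟩, hmono⟩ := hu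
    intro i hi1 hi2
    have hmem : u i ∈ Set.Icc 1 k := by
      rw [← hk]; exact ⟨i, Set.mem_Icc.mpr ⟨hi1, hi2⟩, rfl⟩
    rw [Set.mem_Icc] at hmem
    exact ⟨hmem.1, Finset.le_sup (Finset.mem_Icc.mpr ⟨hi1, hi2⟩)⟩
  have hun : u n = M := by
    apply le_antisymm (Finset.le_sup (Finset.mem_Icc.mpr ⟨hn, le_refl n⟩))
    apply Finset.sup_le
    intro i hi
    rw [Finset.mem_Icc] at hi
    exact hu.2 (Set.mem_Icc.mpr hi) (Set.mem_Icc.mpr ⟨hn, le_refl n⟩) hi.2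
  have hg : ∀ i, 1 ≤ i → i ≤ n → wcomp n (wrev n u) i = M + 1 - u (n + 1 - i) := by
    intro i hi1 hi2
    simp only [wcomp]
    rw [if_pos (⟨hi1, hi2⟩ : 1 ≤ i ∧ i ≤ n), wmax_wrev]
    simp only [wrev]
    rw [if_pos (⟨hi1, hi2⟩ : 1 ≤ i ∧ i ≤ n)]
  have hword : IsWord n (wcomp n (wrev n u)) := by
    intro i hi
    rw [Set.mem_Icc] at hi
    simp only [wcomp]
    rw [if_neg hi]
  have hg1 : wcomp n (wrev n u) 1 = 1 := by
    rw [hg 1 (le_refl 1) hn]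
    have : n + 1 - 1 = n := by omega
    rw [this, hun]
    omega
  obtain ⟨_, husteps⟩ := wi_steps hn hu
  have hsteps : ∀ i, 1 ≤ i → i ≤ n - 1 →
      (wcomp n (wrev n u) (i + 1) = wcomp n (wrev n u) i ∨
       wcomp n (wrev n u) (i + 1) = wcomp n (wrev n u) i + 1) := by
    intro i hi1 hi2
    rw [hg i hi1 (by omega), hg (i + 1) (by omega) (by omega)]
    have e1 : n + 1 - (i + 1) = n - i := by omega
    have e2 : n + 1 - i = (n - i) + 1 := by omega
    rw [e1, e2]
    have hstep := husteps (n - i) (by omega) (by omega)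
    have hv1 := hval (n - i) (by omega) (by omega)
    have hv2 := hval (n - i + 1) (by omega) (by omega)
    omega
  have hwi : IsWI n (wcomp n (wrev n u)) := cayley_of_steps hn hword hg1 hsteps
  refine ⟨hwi, fun i hi1 hi2 => ?_⟩
  rw [mem_desSet', mem_desSet']
  rw [hg i hi1 (by omega), hg (i + 1) (by omega) (by omega)]
  have e1 : n + 1 - (i + 1) = n - i := by omega
  have e2 : n + 1 - i = (n - i) + 1 := by omega
  rw [e1, e2]
  have hv1 := hval (n - i) (by omega) (by omega)
  have hv2 := hval (n - i + 1) (by omega) (by omega)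
  constructor
  · rintro ⟨_, h⟩
    exact ⟨⟨by omega, by omega⟩, by omega⟩
  · rintro ⟨_, h⟩
    exact ⟨⟨hi1, hi2⟩, by omega⟩

end Aux


/-- Proposition 3.4: `θ(u,v) = (((u^r)^c)*, v^r)` is a bijection from
`BBur[n] = {(u,v) : Des(u) ⊆ Des∘(v)}` onto `Ω[n] = {(u,v) : Des(u) ⊇ Des(v)}`. -/
theorem stmt5 (n : ℕ) (hn : 1 ≤ n) :
    Set.BijOn
      (fun p : (ℕ → ℕ) × (ℕ → ℕ) =>
        (conjWI n (wcomp n (wrev n p.1)), wrev n p.2))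
      (BBurPairs n) (OmegaPairs n) := by
  refine ⟨?_, ?_, ?_⟩
  · -- MapsTo
    rintro ⟨u, v⟩ ⟨hu, hv, hdes⟩
    obtain ⟨hgwi, hgdes⟩ := comp_rev_wi hn hu
    obtain ⟨hcwi, hcdes⟩ := conjWI_spec hn (wcomp n (wrev n u))
    refine ⟨hcwi, wrev_cayley hv, ?_⟩
    intro i hi
    obtain ⟨⟨hi1, hi2⟩, _⟩ := mem_desSet'.mp hi
    rw [hcdes, Finset.mem_sdiff]
    refine ⟨Finset.mem_Icc.mpr ⟨hi1, hi2⟩, ?_⟩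
    intro hcon
    have h1 : n - i ∈ desSet n u := (hgdes i hi1 hi2).mp hcon
    have h2 : n - i ∈ sdesSet n v := hdes h1
    exact ((rev_des hn hi1 hi2).1.mp hi) h2
  · -- InjOn
    rintro ⟨u1, v1⟩ ⟨hu1, hv1, hd1⟩ ⟨u2, v2⟩ ⟨hu2, hv2, hd2⟩ heq
    simp only [Prod.mk.injEq] at heq
    obtain ⟨h1, h2⟩ := heq
    have hveq : v1 = v2 := by
      have h3 := congrArg (wrev n) h2
      rwa [wrev_wrev hv1.1, wrev_wrev hv2.1] at h3
    have hueq : u1 = u2 := by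
      obtain ⟨hg1, hgd1⟩ := comp_rev_wi hn hu1
      obtain ⟨hg2, hgd2⟩ := comp_rev_wi hn hu2
      obtain ⟨hc1, hcd1⟩ := conjWI_spec hn (wcomp n (wrev n u1))
      obtain ⟨hc2, hcd2⟩ := conjWI_spec hn (wcomp n (wrev n u2))
      rw [h1] at hcd1
      have h3 : desSet n (wcomp n (wrev n u1)) = desSet n (wcomp n (wrev n u2)) :=
        sdiff_cancel desSet_subset_Icc desSet_subset_Icc (hcd1 ▸ hcd2)
      have hdd : desSet n u1 = desSet n u2 := by
        ext j
        by_cases hj : 1 ≤ j ∧ j ≤ n - 1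
        · have hjj : n - (n - j) = j := by omega
          rw [← hjj, ← hgd1 (n - j) (by omega) (by omega),
            ← hgd2 (n - j) (by omega) (by omega), h3]
        · constructor
          · intro h; exact absurd (mem_desSet'.mp h).1 hj
          · intro h; exact absurd (mem_desSet'.mp h).1 hj
      exact wi_unique hn hu1 hu2 hdd
    rw [hueq, hveq]
  · -- SurjOn
    rintro ⟨w, z⟩ ⟨hw, hz, hdz⟩
    obtain ⟨u, hu, hudes⟩ := wi_exists hn
      ((Finset.Icc 1 (n - 1)).filter (fun i => n - i ∉ desSet n w))
      (Finset.filter_subset _ _)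
    obtain ⟨hgwi, hgdes⟩ := comp_rev_wi hn hu
    obtain ⟨hcwi, hcdes⟩ := conjWI_spec hn (wcomp n (wrev n u))
    have hgdeq : desSet n (wcomp n (wrev n u)) = Finset.Icc 1 (n - 1) \ desSet n w := by
      ext j
      by_cases hj : 1 ≤ j ∧ j ≤ n - 1
      · rw [hgdes j hj.1 hj.2, hudes, Finset.mem_filter, Finset.mem_sdiff]
        have hnj : n - (n - j) = j := by omega
        rw [hnj]
        simp only [Finset.mem_Icc]
        constructor
        · rintro ⟨_, h⟩; exact ⟨hj, h⟩
        · rintro ⟨_, h⟩; exact ⟨⟨by omega, by omega⟩, h⟩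
      · constructor
        · intro h; exact absurd (mem_desSet'.mp h).1 hj
        · intro h; exact absurd (Finset.mem_Icc.mp (Finset.mem_sdiff.mp h).1) hj
    have hcw : conjWI n (wcomp n (wrev n u)) = w := by
      apply wi_unique hn hcwi hw
      rw [hcdes, hgdeq, Finset.sdiff_sdiff_self_left,
        Finset.inter_eq_right.mpr desSet_subset_Icc]
    refine ⟨(u, wrev n z), ⟨hu, wrev_cayley hz, ?_⟩, ?_⟩
    · intro i hi
      rw [hudes, Finset.mem_filter, Finset.mem_Icc] at hi
      obtain ⟨⟨hi1, hi2⟩, hiw⟩ := hi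
      exact (rev_des hn hi1 hi2).2.mpr (fun hmem => hiw (hdz hmem))
    · show (conjWI n (wcomp n (wrev n u)), wrev n (wrev n z)) = (w, z)
      rw [hcw, wrev_wrev hz.1]


end CayPaper
end

section
/- For n ≥ 0: (i) Σ_{v ∈ Cay[n]} 2^{des(v)} equals the number of pairs (u,v) ∈ WI[n] × Cay[n] with Des(u) ⊆ Des(v), which equals the number of Burge matrices of size n; (ii) Σ_{v ∈ Cay[n]} 2^{des∘(v)} equals the number of pairs (u,v) ∈ WI[n] × Cay[n] with Des(u) ⊆ Des∘(v), which equals the number of binary Burge matrices of size n; (iii) Σ_{v ∈ S_n} 2^{des(v)} equals the number of pairs (u,v) with u ∈ WI[n], v a permutation of {1,…,n}, and Des(u) ⊆ Des(v), which equals the number of Burge matrices of size n whose every column sums to 1. -/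
namespace CayPaper

/-!
Counting pairs fibrewise over `v`: a weakly increasing Cayley permutation `u` of length `n` is
determined by its descent set, which can be any subset of `{1,…,n-1}`, so each `v` contributes
`2 ^ |Des(v)|` (resp. `2 ^ |Des∘(v)|`) pairs.

A pair `(u, v)` is sent to the matrix counting its columns `(u i, v i)`. The condition
`Des(u) ⊆ Des(v)` says precisely that the columns are sorted lexicographically, ties in the top
row broken by decreasing bottom row, so the pair is recovered by sorting the entries of the
matrix. Under this correspondence `Des(u) ⊆ Des∘(v)` means that no column repeats (a binary
matrix), and `v ∈ S_n` means that there are `n` columns, which for a Burge matrix of size `n`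
means that every column sums to `1`.
-/

open Finset

section Cayley

variable {n : ℕ}

lemma exists_fin_add_one_eq_iff {k m : ℕ} : (∃ a : Fin k, (a : ℕ) + 1 = m) ↔ m ∈ Set.Icc 1 k :=
  ⟨fun ⟨a, ha⟩ => ⟨by omega, by omega⟩, fun ⟨h1, h2⟩ => ⟨⟨m - 1, by omega⟩, by simp; omega⟩⟩

lemma wmax_eq_of_image_eq {v : ℕ → ℕ} {k : ℕ} (himg : v '' Set.Icc 1 n = Set.Icc 1 k) :
    wmax n v = k := by
  have himg' : (Finset.Icc 1 n).image v = Finset.Icc 1 k := by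
    apply Finset.coe_injective
    simpa using himg
  rw [wmax, ← Function.id_comp v, ← Finset.sup_image, himg']
  rcases Nat.eq_zero_or_pos k with rfl | hk
  · rfl
  · exact le_antisymm (Finset.sup_le fun m hm => (mem_Icc.mp hm).2)
      (Finset.le_sup (f := id) (mem_Icc.mpr ⟨hk, le_rfl⟩))

lemma IsCayley.image_eq {v : ℕ → ℕ} (hv : IsCayley n v) :
    v '' Set.Icc 1 n = Set.Icc 1 (wmax n v) := by
  obtain ⟨_, k, himg⟩ := hv
  rw [himg, wmax_eq_of_image_eq himg]

lemma IsCayley.exists_fin_add_one_eq {v : ℕ → ℕ} (hv : IsCayley n v) {i : ℕ}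
    (hi : i ∈ Set.Icc 1 n) : ∃ a : Fin (wmax n v), (a : ℕ) + 1 = v i :=
  exists_fin_add_one_eq_iff.mpr (hv.image_eq ▸ Set.mem_image_of_mem v hi)

lemma IsCayley.exists_apply_eq {v : ℕ → ℕ} (hv : IsCayley n v) (a : Fin (wmax n v)) :
    ∃ i ∈ Set.Icc 1 n, v i = a + 1 :=
  (hv.image_eq ▸ exists_fin_add_one_eq_iff.mp ⟨a, rfl⟩ : (a : ℕ) + 1 ∈ v '' Set.Icc 1 n)

lemma IsCayley.mem_image {v : ℕ → ℕ} (hv : IsCayley n v) {i m : ℕ} (hi : i ∈ Set.Icc 1 n)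
    (hm1 : 1 ≤ m) (hm : m ≤ v i) : ∃ j ∈ Set.Icc 1 n, v j = m := by
  obtain ⟨_, k, himg⟩ := hv
  have hvi : v i ∈ Set.Icc 1 k := himg ▸ Set.mem_image_of_mem v hi
  have hm' : m ∈ Set.Icc 1 k := ⟨hm1, hm.trans hvi.2⟩
  rwa [← himg] at hm'

lemma IsCayley.apply_le {v : ℕ → ℕ} (hv : IsCayley n v) (i : ℕ) : v i ≤ n := by
  obtain ⟨hw, k, himg⟩ := hv
  by_cases hi : i ∈ Set.Icc 1 n
  · have hk : k ≤ n := by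
      simpa [himg] using Set.ncard_image_le (f := v) (Set.finite_Icc 1 n)
    exact ((himg ▸ Set.mem_image_of_mem v hi : v i ∈ Set.Icc 1 k).2).trans hk
  · rw [hw i hi]
    exact Nat.zero_le n

lemma finite_isCayley : {v | IsCayley n v}.Finite := by
  refine Set.Finite.of_finite_image (Set.toFinite _)
    (f := fun v (i : Fin (n + 1)) => (⟨min (v i) n, by omega⟩ : Fin (n + 1))) ?_
  intro v hv w hw h
  funext i
  by_cases hi : i ≤ n
  · have hvw := congrArg Fin.val (congrFun h ⟨i, by omega⟩)
    have := hv.apply_le i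
    have := hw.apply_le i
    simp only at hvw
    omega
  · have hi' : i ∉ Set.Icc 1 n := fun h => hi h.2
    rw [hv.1 i hi', hw.1 i hi']

end Cayley

section WeaklyIncreasing

variable {n : ℕ}

lemma image_Icc_eq_Icc_of_succ_le {f : ℕ → ℕ} (hn : 1 ≤ n) (h1 : f 1 = 1)
    (hmono : MonotoneOn f (Set.Icc 1 n))
    (hstep : ∀ i, 1 ≤ i → i + 1 ≤ n → f (i + 1) ≤ f i + 1) :
    f '' Set.Icc 1 n = Set.Icc 1 (f n) := by
  refine Set.Subset.antisymm ?_ fun m ⟨hm1, hm2⟩ => ?_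
  · rintro _ ⟨i, hi, rfl⟩
    exact ⟨h1 ▸ hmono ⟨le_rfl, hn⟩ hi hi.1, hmono hi ⟨hn, le_rfl⟩ hi.2⟩
  -- the first index whose value reaches `m` takes the value `m`
  have hex : ∃ i, m ≤ f (i + 1) := ⟨n - 1, by rwa [Nat.sub_add_cancel hn]⟩
  have hle : Nat.find hex ≤ n - 1 := Nat.find_le (by rwa [Nat.sub_add_cancel hn])
  refine ⟨Nat.find hex + 1, ⟨by omega, by omega⟩, le_antisymm ?_ (Nat.find_spec hex)⟩
  rcases Nat.eq_zero_or_pos (Nat.find hex) with h0 | hpos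
  · rw [h0, h1]; omega
  · have hbelow := Nat.find_min hex (Nat.sub_lt hpos one_pos)
    rw [Nat.sub_add_cancel (show 1 ≤ Nat.find hex from hpos)] at hbelow
    have := hstep (Nat.find hex) hpos (by omega)
    omega

def wiOfDesSet (n : ℕ) (S : Finset ℕ) : ℕ → ℕ := fun i =>
  if 1 ≤ i ∧ i ≤ n then #{j ∈ Ico 1 i | j ∉ S} + 1 else 0

lemma wiOfDesSet_of_mem (S : Finset ℕ) {i : ℕ} (h1 : 1 ≤ i) (h2 : i ≤ n) :
    wiOfDesSet n S i = #{j ∈ Ico 1 i | j ∉ S} + 1 := if_pos ⟨h1, h2⟩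

lemma wiOfDesSet_one (S : Finset ℕ) (hn : 1 ≤ n) : wiOfDesSet n S 1 = 1 := by
  simp [wiOfDesSet_of_mem S le_rfl hn]

lemma wiOfDesSet_succ (S : Finset ℕ) {i : ℕ} (h1 : 1 ≤ i) (h2 : i + 1 ≤ n) :
    wiOfDesSet n S (i + 1) = wiOfDesSet n S i + if i ∈ S then 0 else 1 := by
  rw [wiOfDesSet_of_mem S (by omega) h2, wiOfDesSet_of_mem S h1 (by omega),
    Nat.Ico_succ_right_eq_insert_Ico h1, filter_insert]
  by_cases h : i ∈ S <;> simp [h]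

lemma wiOfDesSet_monotoneOn (S : Finset ℕ) : MonotoneOn (wiOfDesSet n S) (Set.Icc 1 n) :=
  fun i ⟨hi1, hi2⟩ j ⟨_, hj2⟩ hij => by
    rw [wiOfDesSet_of_mem S hi1 hi2, wiOfDesSet_of_mem S (hi1.trans hij) hj2]
    gcongr

lemma isWI_wiOfDesSet (S : Finset ℕ) : IsWI n (wiOfDesSet n S) := by
  refine ⟨⟨fun i hi => if_neg hi, ?_⟩, wiOfDesSet_monotoneOn S⟩
  rcases Nat.eq_zero_or_pos n with rfl | hn
  · exact ⟨0, by simp⟩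
  · refine ⟨_, image_Icc_eq_Icc_of_succ_le hn (wiOfDesSet_one S hn) (wiOfDesSet_monotoneOn S)
      fun i h1 h2 => ?_⟩
    rw [wiOfDesSet_succ S h1 h2]
    split <;> omega

lemma desSet_wiOfDesSet {S : Finset ℕ} (hS : S ⊆ Icc 1 (n - 1)) :
    desSet n (wiOfDesSet n S) = S := by
  ext i
  simp only [desSet, mem_filter, mem_Icc]
  constructor
  · rintro ⟨hi, hdes⟩
    rw [wiOfDesSet_succ S hi.1 (by omega)] at hdes
    by_contra hiS
    rw [if_neg hiS] at hdes
    omega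
  · intro hiS
    have hi := mem_Icc.mp (hS hiS)
    refine ⟨hi, ?_⟩
    rw [wiOfDesSet_succ S hi.1 (by omega), if_pos hiS]
    omega

lemma IsWI.apply_one {u : ℕ → ℕ} (hu : IsWI n u) (hn : 1 ≤ n) : u 1 = 1 := by
  have h1 : 1 ∈ Set.Icc 1 n := ⟨le_rfl, hn⟩
  have hpos : 1 ≤ u 1 := by
    obtain ⟨_, k, himg⟩ := hu.1
    exact (himg ▸ Set.mem_image_of_mem u h1 : u 1 ∈ Set.Icc 1 k).1
  obtain ⟨j, hj, hj1⟩ := hu.1.mem_image h1 le_rfl hpos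
  have := hu.2 h1 hj hj.1
  omega

lemma IsWI.apply_succ {u : ℕ → ℕ} (hu : IsWI n u) {i : ℕ} (h1 : 1 ≤ i) (h2 : i + 1 ≤ n) :
    u (i + 1) = u i + if i ∈ desSet n u then 0 else 1 := by
  have hi : i ∈ Set.Icc 1 n := ⟨h1, by omega⟩
  have hi' : i + 1 ∈ Set.Icc 1 n := ⟨by omega, h2⟩
  have hle : u i ≤ u (i + 1) := hu.2 hi hi' (by omega)
  have hdes : i ∈ desSet n u ↔ u (i + 1) ≤ u i := by
    simp only [desSet, mem_filter, mem_Icc]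
    omega
  split_ifs with h
  · have := hdes.mp h
    omega
  · -- the value `u i + 1` is taken somewhere, and monotonicity forces it at `i + 1`
    by_contra hne
    obtain ⟨j, hj, hju⟩ := hu.1.mem_image hi' (by omega) (show u i + 1 ≤ u (i + 1) by
      have := hdes.not.mp h; omega)
    rcases le_or_gt j i with hji | hij
    · have := hu.2 hj hi hji
      omega
    · have := hu.2 hi' hj hij
      have := hdes.not.mp h
      omega

lemma IsWI.eq_wiOfDesSet {u : ℕ → ℕ} (hu : IsWI n u) : u = wiOfDesSet n (desSet n u) := by
  funext i
  by_cases hi : 1 ≤ i ∧ i ≤ n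
  · obtain ⟨hi1, hi2⟩ := hi
    induction i, hi1 using Nat.le_induction with
    | base => rw [hu.apply_one (by omega), wiOfDesSet_one _ (by omega)]
    | succ i hi ih =>
      rw [hu.apply_succ hi hi2, ih (by omega), wiOfDesSet_succ _ hi hi2]
  · rw [hu.1.1 i hi, wiOfDesSet, if_neg hi]

lemma bijOn_wiOfDesSet {T : Finset ℕ} (hT : T ⊆ Icc 1 (n - 1)) :
    Set.BijOn (wiOfDesSet n) (T.powerset : Set (Finset ℕ)) {u | IsWI n u ∧ desSet n u ⊆ T} := by
  refine ⟨fun S hS => ?_, fun S hS S' hS' h => ?_, fun u ⟨hu, huT⟩ => ?_⟩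
  · rw [mem_coe, mem_powerset] at hS
    exact ⟨isWI_wiOfDesSet S, (desSet_wiOfDesSet (hS.trans hT)).symm ▸ hS⟩
  · rw [mem_coe, mem_powerset] at hS hS'
    rw [← desSet_wiOfDesSet (hS.trans hT), ← desSet_wiOfDesSet (hS'.trans hT), h]
  · exact ⟨desSet n u, mem_powerset.mpr huT, hu.eq_wiOfDesSet.symm⟩

lemma ncard_isWI_desSet_subset {T : Finset ℕ} (hT : T ⊆ Icc 1 (n - 1)) :
    {u | IsWI n u ∧ desSet n u ⊆ T}.ncard = 2 ^ #T := by
  rw [← (bijOn_wiOfDesSet hT).image_eq, (bijOn_wiOfDesSet hT).injOn.ncard_image,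
    Set.ncard_coe_finset, card_powerset]

lemma desSet_subset (n : ℕ) (v : ℕ → ℕ) : desSet n v ⊆ Icc 1 (n - 1) := filter_subset _ _

lemma sdesSet_subset (n : ℕ) (v : ℕ → ℕ) : sdesSet n v ⊆ Icc 1 (n - 1) := filter_subset _ _

lemma finite_isWI : {u | IsWI n u}.Finite := by
  have h := (bijOn_wiOfDesSet (subset_refl (Icc 1 (n - 1)))).image_eq
  simp only [desSet_subset, and_true] at h
  exact h ▸ (finite_toSet _).image _

lemma ncard_isWI_pairs {V : Set (ℕ → ℕ)} (hV : V.Finite) (D : (ℕ → ℕ) → Finset ℕ)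
    (hD : ∀ v ∈ V, D v ⊆ Icc 1 (n - 1)) :
    {p : (ℕ → ℕ) × (ℕ → ℕ) | IsWI n p.1 ∧ p.2 ∈ V ∧ desSet n p.1 ⊆ D p.2}.ncard
      = ∑ᶠ v ∈ V, 2 ^ #(D v) := by
  have hfib : {p : (ℕ → ℕ) × (ℕ → ℕ) | IsWI n p.1 ∧ p.2 ∈ V ∧ desSet n p.1 ⊆ D p.2}
      = ⋃ v ∈ V, (·, v) '' {u | IsWI n u ∧ desSet n u ⊆ D v} := by
    ext ⟨u, v⟩
    simp only [Set.mem_iUnion, Set.mem_image, Prod.mk.injEq, exists_prop]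
    constructor
    · rintro ⟨hu, hv, hd⟩
      exact ⟨v, hv, u, ⟨hu, hd⟩, rfl, rfl⟩
    · rintro ⟨v, hv, u, ⟨hu, hd⟩, rfl, rfl⟩
      exact ⟨hu, hv, hd⟩
  have hdisj : V.PairwiseDisjoint fun v => (·, v) '' {u | IsWI n u ∧ desSet n u ⊆ D v} :=
    fun v _ w _ hvw => Set.disjoint_left.mpr fun
      | _, ⟨_, _, rfl⟩, ⟨_, _, h⟩ => hvw (congrArg Prod.snd h).symm
  rw [hfib, hV.ncard_biUnion (fun v _ => (finite_isWI.subset fun u hu => hu.1).image _) hdisj]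
  refine finsum_mem_congr rfl fun v hv => ?_
  rw [(Prod.mk_left_injective v).injOn.ncard_image, ncard_isWI_desSet_subset (hD v hv)]

end WeaklyIncreasing

section PermWord

variable {n : ℕ}

lemma isPermWord_iff {v : ℕ → ℕ} :
    IsPermWord n v ↔ IsWord n v ∧ v '' Set.Icc 1 n = Set.Icc 1 n := by
  refine ⟨fun h => ⟨h.1, h.2.image_eq⟩, fun ⟨hw, himg⟩ => ⟨hw, ?_, ?_, himg.symm.subset⟩⟩
  · exact fun x hx => himg ▸ Set.mem_image_of_mem v hx
  · exact Set.injOn_of_ncard_image_eq (by rw [himg])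

lemma IsPermWord.isCayley {v : ℕ → ℕ} (h : IsPermWord n v) : IsCayley n v :=
  ⟨h.1, n, h.2.image_eq⟩

lemma permWord_add_one (σ : Equiv.Perm (Fin n)) {j : ℕ} (hj : j < n) :
    permWord n σ (j + 1) = σ ⟨j, hj⟩ + 1 := by
  simp [permWord, hj]

lemma isPermWord_permWord (σ : Equiv.Perm (Fin n)) : IsPermWord n (permWord n σ) := by
  refine isPermWord_iff.mpr ⟨fun i hi => dif_neg hi, ?_⟩
  ext m
  simp only [Set.mem_image, Set.mem_Icc]
  constructor
  · rintro ⟨i, hi, rfl⟩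
    rw [permWord, dif_pos hi]
    omega
  · rintro ⟨hm1, hm2⟩
    have hj := (σ.symm ⟨m - 1, by omega⟩).isLt
    refine ⟨σ.symm ⟨m - 1, by omega⟩ + 1, ⟨by omega, by omega⟩, ?_⟩
    rw [permWord_add_one σ hj, Fin.eta, Equiv.apply_symm_apply]
    exact Nat.sub_add_cancel hm1

lemma permWord_injective : Function.Injective (permWord n) := fun σ τ h =>
  Equiv.ext fun j => Fin.ext <| by
    simpa [permWord_add_one _ j.isLt] using congrFun h (j + 1)

lemma range_permWord : Set.range (permWord n) = {v | IsPermWord n v} := by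
  refine Set.Subset.antisymm (Set.range_subset_iff.mpr isPermWord_permWord) fun v hv => ?_
  have hval (j : Fin n) : v (j + 1) ∈ Set.Icc 1 n := hv.2.mapsTo ⟨by omega, by omega⟩
  let f : Fin n → Fin n := fun j =>
    ⟨v (j + 1) - 1, by have := (hval j).1; have := (hval j).2; omega⟩
  have hf : f.Injective := fun a b hab => by
    have := (hval a).1
    have := (hval b).1
    have hab' : v (a + 1) = v (b + 1) := by simp only [f, Fin.mk.injEq] at hab; omega
    have := hv.2.injOn ⟨by omega, by omega⟩ ⟨by omega, by omega⟩ hab'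
    exact Fin.ext (by omega)
  refine ⟨Equiv.ofBijective f hf.bijective_of_finite, funext fun i => ?_⟩
  by_cases hi : i ∈ Set.Icc 1 n
  · obtain ⟨j, rfl⟩ : ∃ j, i = j + 1 := ⟨i - 1, by have := hi.1; omega⟩
    have hj : j < n := by have := hi.2; omega
    rw [permWord_add_one _ hj]
    have : 1 ≤ v (j + 1) := (hval ⟨j, hj⟩).1
    simp only [Equiv.ofBijective_apply, f]
    omega
  · rw [permWord, dif_neg (show ¬(1 ≤ i ∧ i ≤ n) from hi), hv.1 i hi]

lemma sum_perm_eq_finsum_isPermWord {R : Type*} [AddCommMonoid R] (g : (ℕ → ℕ) → R) :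
    ∑ σ : Equiv.Perm (Fin n), g (permWord n σ) = ∑ᶠ v ∈ {v | IsPermWord n v}, g v := by
  rw [← range_permWord, finsum_mem_range permWord_injective, finsum_eq_sum_of_fintype]

end PermWord

section Biword

def ColumnLE (x y : ℕ × ℕ) : Prop := x.1 < y.1 ∨ (x.1 = y.1 ∧ y.2 ≤ x.2)

instance : DecidableRel ColumnLE := fun _ _ => inferInstanceAs (Decidable (_ ∨ _))
instance : IsTrans (ℕ × ℕ) ColumnLE := ⟨fun _ _ _ => by unfold ColumnLE; omega⟩
instance : Std.Antisymm ColumnLE := ⟨fun _ _ h h' => by unfold ColumnLE at h h'; ext <;> omega⟩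
instance : Std.Total ColumnLE := ⟨fun _ _ => by unfold ColumnLE; omega⟩

def ColumnLT (x y : ℕ × ℕ) : Prop := x.1 < y.1 ∨ (x.1 = y.1 ∧ y.2 < x.2)

instance : IsTrans (ℕ × ℕ) ColumnLT := ⟨fun _ _ _ => by unfold ColumnLT; omega⟩

def biword (n : ℕ) (pr : (ℕ → ℕ) × (ℕ → ℕ)) : List (ℕ × ℕ) :=
  (List.range n).map fun j => (pr.1 (j + 1), pr.2 (j + 1))

/-- Inverse of `biword`; the leading `0` makes position `0` (outside the word) read `0`. -/
def ofBiword (l : List (ℕ × ℕ)) : (ℕ → ℕ) × (ℕ → ℕ) :=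
  (fun i => ((0 :: l).getD i 0).1, fun i => ((0 :: l).getD i 0).2)

variable {n : ℕ}

@[simp]
lemma length_biword (pr : (ℕ → ℕ) × (ℕ → ℕ)) : (biword n pr).length = n := by
  simp [biword]

@[simp]
lemma getElem_biword (pr : (ℕ → ℕ) × (ℕ → ℕ)) {j : ℕ} (hj : j < (biword n pr).length) :
    (biword n pr)[j] = (pr.1 (j + 1), pr.2 (j + 1)) := by
  simp [biword]

lemma mem_biword {pr : (ℕ → ℕ) × (ℕ → ℕ)} {x : ℕ × ℕ} :
    x ∈ biword n pr ↔ ∃ i ∈ Set.Icc 1 n, (pr.1 i, pr.2 i) = x := by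
  simp only [biword, List.mem_map, List.mem_range, Set.mem_Icc]
  constructor
  · rintro ⟨j, hj, rfl⟩
    exact ⟨j + 1, ⟨by omega, hj⟩, rfl⟩
  · rintro ⟨i, hi, rfl⟩
    exact ⟨i - 1, by omega, by rw [Nat.sub_add_cancel hi.1]⟩

lemma ofBiword_apply_add_one (l : List (ℕ × ℕ)) {j : ℕ} (hj : j < l.length) :
    ((ofBiword l).1 (j + 1), (ofBiword l).2 (j + 1)) = l[j] := by
  simp [ofBiword, List.getElem?_eq_getElem hj]

lemma ofBiword_of_notMem (l : List (ℕ × ℕ)) {i : ℕ} (hi : i ∉ Set.Icc 1 l.length) :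
    (ofBiword l).1 i = 0 ∧ (ofBiword l).2 i = 0 := by
  rcases i with _ | j
  · simp [ofBiword]
  · have hj : l.length ≤ j := by simp only [Set.mem_Icc, not_and, not_le] at hi; omega
    simp [ofBiword, List.getElem?_eq_none hj]

lemma biword_ofBiword (l : List (ℕ × ℕ)) : biword l.length (ofBiword l) = l :=
  List.ext_getElem (by simp) fun j _ hj => by
    rw [getElem_biword, ofBiword_apply_add_one l hj]

lemma ofBiword_biword {pr : (ℕ → ℕ) × (ℕ → ℕ)} (h1 : IsWord n pr.1) (h2 : IsWord n pr.2) :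
    ofBiword (biword n pr) = pr := by
  have hcol (i : ℕ) :
      ((ofBiword (biword n pr)).1 i, (ofBiword (biword n pr)).2 i) = (pr.1 i, pr.2 i) := by
    by_cases hi : i ∈ Set.Icc 1 n
    · obtain ⟨j, rfl⟩ : ∃ j, i = j + 1 := ⟨i - 1, by have := hi.1; omega⟩
      rw [ofBiword_apply_add_one _ (by simpa using hi.2), getElem_biword]
    · have hi' : i ∉ Set.Icc 1 (biword n pr).length := by simpa using hi
      rw [(ofBiword_of_notMem _ hi').1, (ofBiword_of_notMem _ hi').2, h1 i hi, h2 i hi]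
  exact Prod.ext (funext fun i => congrArg Prod.fst (hcol i))
    (funext fun i => congrArg Prod.snd (hcol i))

lemma pairwise_biword {r : ℕ × ℕ → ℕ × ℕ → Prop} [IsTrans (ℕ × ℕ) r] {pr : (ℕ → ℕ) × (ℕ → ℕ)}
    (h : ∀ i, 1 ≤ i → i + 1 ≤ n → r (pr.1 i, pr.2 i) (pr.1 (i + 1), pr.2 (i + 1))) :
    (biword n pr).Pairwise r := by
  rw [← List.isChain_iff_pairwise, List.isChain_iff_getElem]
  intro j hj
  simp only [length_biword] at hj
  simpa using h (j + 1) (by omega) (by omega)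

end Biword

section BurgeMatrix

variable {n p q : ℕ}

lemma IsBurge.matSize_eq_iff {M : Matrix (Fin p) (Fin q) ℕ} (hB : IsBurge M) :
    matSize M = q ↔ ∀ j, ∑ i, M i j = 1 := by
  have hcol (j : Fin q) : 1 ≤ ∑ i, M i j := by
    obtain ⟨i, hi⟩ := hB.2 j
    exact (Nat.one_le_iff_ne_zero.mpr hi).trans
      (single_le_sum (f := fun i => M i j) (fun _ _ => Nat.zero_le _) (mem_univ i))
  have hswap : matSize M = ∑ j, ∑ i, M i j := sum_comm
  rw [hswap]
  refine ⟨fun h j => ?_, fun h => by simp [h]⟩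
  have hsum : ∑ _j : Fin q, 1 = ∑ j, ∑ i, M i j := by simpa using h.symm
  exact ((sum_eq_sum_iff_of_le fun j _ => hcol j).mp hsum j (mem_univ j)).symm

def entryMultiset (M : Matrix (Fin p) (Fin q) ℕ) : Multiset (ℕ × ℕ) :=
  ∑ a, ∑ b, Multiset.replicate (M a b) ((a : ℕ) + 1, (b : ℕ) + 1)

lemma card_entryMultiset (M : Matrix (Fin p) (Fin q) ℕ) :
    Multiset.card (entryMultiset M) = matSize M := by
  simp [entryMultiset, matSize]

lemma mem_entryMultiset {M : Matrix (Fin p) (Fin q) ℕ} {x : ℕ × ℕ} :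
    x ∈ entryMultiset M ↔ ∃ a b, M a b ≠ 0 ∧ ((a : ℕ) + 1, (b : ℕ) + 1) = x := by
  simp [entryMultiset, Multiset.mem_sum, Multiset.mem_replicate, eq_comm]

lemma count_entryMultiset (M : Matrix (Fin p) (Fin q) ℕ) (a : Fin p) (b : Fin q) :
    (entryMultiset M).count ((a : ℕ) + 1, (b : ℕ) + 1) = M a b := by
  simp [entryMultiset, Multiset.count_sum', Multiset.count_replicate, Fin.val_inj, ite_and]

lemma length_sort_entryMultiset (M : Matrix (Fin p) (Fin q) ℕ) :
    ((entryMultiset M).sort ColumnLE).length = matSize M := by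
  rw [Multiset.length_sort, card_entryMultiset]

end BurgeMatrix

section BurgeCorrespondence

variable {n p q : ℕ}

/-- Entry `(a, b)` of the (`0`-indexed) matrix counts the columns `(a+1, b+1)` of the pair. -/
def toBurge (n : ℕ) (pr : (ℕ → ℕ) × (ℕ → ℕ)) : Σ p : ℕ, Σ q : ℕ, Matrix (Fin p) (Fin q) ℕ :=
  ⟨wmax n pr.1, wmax n pr.2, fun a b => Multiset.count ((a : ℕ) + 1, (b : ℕ) + 1) (biword n pr)⟩

def ofBurge (M : Matrix (Fin p) (Fin q) ℕ) : (ℕ → ℕ) × (ℕ → ℕ) :=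
  ofBiword ((entryMultiset M).sort ColumnLE)

lemma toBurge_apply_ne_zero_iff {pr : (ℕ → ℕ) × (ℕ → ℕ)} {a : Fin (wmax n pr.1)}
    {b : Fin (wmax n pr.2)} :
    (toBurge n pr).2.2 a b ≠ 0 ↔ ∃ i ∈ Set.Icc 1 n, pr.1 i = a + 1 ∧ pr.2 i = b + 1 := by
  simp only [toBurge, ne_eq, Multiset.count_eq_zero, not_not, Multiset.mem_coe, mem_biword,
    Prod.mk.injEq]

lemma isBurge_toBurge {pr : (ℕ → ℕ) × (ℕ → ℕ)} (h1 : IsCayley n pr.1) (h2 : IsCayley n pr.2) :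
    IsBurge (toBurge n pr).2.2 := by
  constructor
  · intro a
    obtain ⟨i, hi, hia⟩ := h1.exists_apply_eq a
    obtain ⟨b, hb⟩ := h2.exists_fin_add_one_eq hi
    exact ⟨b, toBurge_apply_ne_zero_iff.mpr ⟨i, hi, hia, hb.symm⟩⟩
  · intro b
    obtain ⟨i, hi, hib⟩ := h2.exists_apply_eq b
    obtain ⟨a, ha⟩ := h1.exists_fin_add_one_eq hi
    exact ⟨a, toBurge_apply_ne_zero_iff.mpr ⟨i, hi, ha.symm, hib⟩⟩

lemma entryMultiset_toBurge {pr : (ℕ → ℕ) × (ℕ → ℕ)} (h1 : IsCayley n pr.1)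
    (h2 : IsCayley n pr.2) : entryMultiset (toBurge n pr).2.2 = biword n pr := by
  ext x
  by_cases hx : ∃ (a : Fin (wmax n pr.1)) (b : Fin (wmax n pr.2)), ((a : ℕ) + 1, (b : ℕ) + 1) = x
  · obtain ⟨a, b, rfl⟩ := hx
    exact count_entryMultiset _ a b
  · rw [Multiset.count_eq_zero.mpr, Multiset.count_eq_zero.mpr]
    · rw [Multiset.mem_coe, mem_biword]
      rintro ⟨i, hi, rfl⟩
      obtain ⟨a, ha⟩ := h1.exists_fin_add_one_eq hi
      obtain ⟨b, hb⟩ := h2.exists_fin_add_one_eq hi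
      exact hx ⟨a, b, by rw [ha, hb]⟩
    · rw [mem_entryMultiset]
      rintro ⟨a, b, -, h⟩
      exact hx ⟨a, b, h⟩

lemma matSize_toBurge {pr : (ℕ → ℕ) × (ℕ → ℕ)} (h1 : IsCayley n pr.1) (h2 : IsCayley n pr.2) :
    matSize (toBurge n pr).2.2 = n := by
  rw [← card_entryMultiset, entryMultiset_toBurge h1 h2, Multiset.coe_card, length_biword]

lemma pairwise_columnLE_biword {pr : (ℕ → ℕ) × (ℕ → ℕ)} (hu : IsWI n pr.1)
    (hdes : desSet n pr.1 ⊆ desSet n pr.2) : (biword n pr).Pairwise ColumnLE := by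
  refine pairwise_biword fun i h1 h2 => ?_
  have hsucc := hu.apply_succ h1 h2
  by_cases hd : i ∈ desSet n pr.1
  · have := hdes hd
    simp only [desSet, mem_filter] at this
    simp only [ColumnLE, if_pos hd] at hsucc ⊢
    omega
  · simp only [ColumnLE, if_neg hd] at hsucc ⊢
    omega

lemma pairwise_columnLT_biword {pr : (ℕ → ℕ) × (ℕ → ℕ)} (hu : IsWI n pr.1)
    (hdes : desSet n pr.1 ⊆ sdesSet n pr.2) : (biword n pr).Pairwise ColumnLT := by
  refine pairwise_biword fun i h1 h2 => ?_
  have hsucc := hu.apply_succ h1 h2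
  by_cases hd : i ∈ desSet n pr.1
  · have := hdes hd
    simp only [sdesSet, mem_filter] at this
    simp only [ColumnLT, if_pos hd] at hsucc ⊢
    omega
  · simp only [ColumnLT, if_neg hd] at hsucc ⊢
    omega

lemma toBurge_apply_le_one {pr : (ℕ → ℕ) × (ℕ → ℕ)} (hu : IsWI n pr.1)
    (hdes : desSet n pr.1 ⊆ sdesSet n pr.2) (a : Fin (wmax n pr.1)) (b : Fin (wmax n pr.2)) :
    (toBurge n pr).2.2 a b ≤ 1 := by
  have hnodup : (biword n pr).Nodup :=
    (pairwise_columnLT_biword hu hdes).imp fun h heq => by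
      subst heq
      unfold ColumnLT at h
      omega
  exact Multiset.nodup_iff_count_le_one.mp (Multiset.coe_nodup.mpr hnodup) _

lemma ofBurge_toBurge {pr : (ℕ → ℕ) × (ℕ → ℕ)} (hpr : pr ∈ BurPairs n) :
    ofBurge (toBurge n pr).2.2 = pr := by
  obtain ⟨hu, hv, hdes⟩ := hpr
  have hsort : (biword n pr : Multiset (ℕ × ℕ)).sort ColumnLE = biword n pr :=
    (Multiset.coe_eq_coe.mp (Multiset.sort_eq _ _)).eq_of_pairwise' (Multiset.pairwise_sort _ _)
      (pairwise_columnLE_biword hu hdes)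
  rw [ofBurge, entryMultiset_toBurge hu.1 hv, hsort, ofBiword_biword hu.1.1 hv.1]

variable (M : Matrix (Fin p) (Fin q) ℕ)

lemma biword_ofBurge : biword (matSize M) (ofBurge M) = (entryMultiset M).sort ColumnLE := by
  rw [← length_sort_entryMultiset]
  exact biword_ofBiword _

lemma isWord_ofBurge : IsWord (matSize M) (ofBurge M).1 ∧ IsWord (matSize M) (ofBurge M).2 := by
  rw [← length_sort_entryMultiset M]
  exact ⟨fun i hi => (ofBiword_of_notMem _ hi).1, fun i hi => (ofBiword_of_notMem _ hi).2⟩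

lemma exists_ofBurge_eq_iff {x : ℕ × ℕ} :
    (∃ i ∈ Set.Icc 1 (matSize M), ((ofBurge M).1 i, (ofBurge M).2 i) = x) ↔
      x ∈ entryMultiset M := by
  rw [← mem_biword, biword_ofBurge, Multiset.mem_sort]

lemma columnLE_ofBurge {i j : ℕ} (hi : 1 ≤ i) (hij : i < j) (hj : j ≤ matSize M) :
    ColumnLE ((ofBurge M).1 i, (ofBurge M).2 i) ((ofBurge M).1 j, (ofBurge M).2 j) := by
  obtain ⟨i, rfl⟩ : ∃ i', i = i' + 1 := ⟨i - 1, by omega⟩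
  obtain ⟨j, rfl⟩ : ∃ j', j = j' + 1 := ⟨j - 1, by omega⟩
  have hlen := length_sort_entryMultiset M
  rw [ofBurge, ofBiword_apply_add_one _ (by omega), ofBiword_apply_add_one _ (by omega)]
  exact List.pairwise_iff_getElem.mp (Multiset.pairwise_sort _ _) _ _ _ _ (by omega)

lemma ofBurge_injOn {M : Matrix (Fin p) (Fin q) ℕ} (hbin : ∀ a b, M a b ≤ 1) :
    Set.InjOn (fun i => ((ofBurge M).1 i, (ofBurge M).2 i)) (Set.Icc 1 (matSize M)) := by
  have hnodup : ((entryMultiset M).sort ColumnLE).Nodup := by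
    rw [← Multiset.coe_nodup, Multiset.sort_eq, Multiset.nodup_iff_count_le_one]
    intro x
    by_cases hx : x ∈ entryMultiset M
    · obtain ⟨a, b, -, rfl⟩ := mem_entryMultiset.mp hx
      exact (count_entryMultiset M a b).trans_le (hbin a b)
    · exact (Multiset.count_eq_zero.mpr hx).trans_le zero_le_one
  rintro i ⟨hi1, hi2⟩ j ⟨hj1, hj2⟩ hij
  obtain ⟨i, rfl⟩ : ∃ i', i = i' + 1 := ⟨i - 1, by omega⟩
  obtain ⟨j, rfl⟩ : ∃ j', j = j' + 1 := ⟨j - 1, by omega⟩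
  have hlen := length_sort_entryMultiset M
  simp only [ofBurge, ofBiword_apply_add_one _ (hlen ▸ hi2 : i < _),
    ofBiword_apply_add_one _ (hlen ▸ hj2 : j < _)] at hij
  rw [hnodup.getElem_inj_iff] at hij
  rw [hij]

lemma image_ofBurge_fst {M : Matrix (Fin p) (Fin q) ℕ} (hB : IsBurge M) :
    (ofBurge M).1 '' Set.Icc 1 (matSize M) = Set.Icc 1 p := by
  ext m
  constructor
  · rintro ⟨i, hi, rfl⟩
    obtain ⟨a, b, -, h⟩ := mem_entryMultiset.mp ((exists_ofBurge_eq_iff M).mp ⟨i, hi, rfl⟩)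
    exact exists_fin_add_one_eq_iff.mp ⟨a, congrArg Prod.fst h⟩
  · intro hm
    obtain ⟨a, rfl⟩ := exists_fin_add_one_eq_iff.mpr hm
    obtain ⟨b, hb⟩ := hB.1 a
    obtain ⟨i, hi, h⟩ := (exists_ofBurge_eq_iff M).mpr (mem_entryMultiset.mpr ⟨a, b, hb, rfl⟩)
    exact ⟨i, hi, congrArg Prod.fst h⟩

lemma image_ofBurge_snd {M : Matrix (Fin p) (Fin q) ℕ} (hB : IsBurge M) :
    (ofBurge M).2 '' Set.Icc 1 (matSize M) = Set.Icc 1 q := by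
  ext m
  constructor
  · rintro ⟨i, hi, rfl⟩
    obtain ⟨a, b, -, h⟩ := mem_entryMultiset.mp ((exists_ofBurge_eq_iff M).mp ⟨i, hi, rfl⟩)
    exact exists_fin_add_one_eq_iff.mp ⟨b, congrArg Prod.snd h⟩
  · intro hm
    obtain ⟨b, rfl⟩ := exists_fin_add_one_eq_iff.mpr hm
    obtain ⟨a, ha⟩ := hB.2 b
    obtain ⟨i, hi, h⟩ := (exists_ofBurge_eq_iff M).mpr (mem_entryMultiset.mpr ⟨a, b, ha, rfl⟩)
    exact ⟨i, hi, congrArg Prod.snd h⟩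

lemma isWI_ofBurge_fst {M : Matrix (Fin p) (Fin q) ℕ} (hB : IsBurge M) :
    IsWI (matSize M) (ofBurge M).1 := by
  refine ⟨⟨(isWord_ofBurge M).1, p, image_ofBurge_fst hB⟩, fun i hi j hj hij => ?_⟩
  rcases hij.eq_or_lt with rfl | hlt
  · exact le_rfl
  · have := columnLE_ofBurge M hi.1 hlt hj.2
    unfold ColumnLE at this
    omega

lemma isCayley_ofBurge_snd {M : Matrix (Fin p) (Fin q) ℕ} (hB : IsBurge M) :
    IsCayley (matSize M) (ofBurge M).2 :=
  ⟨(isWord_ofBurge M).2, q, image_ofBurge_snd hB⟩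

lemma desSet_ofBurge_subset :
    desSet (matSize M) (ofBurge M).1 ⊆ desSet (matSize M) (ofBurge M).2 := by
  intro i hi
  simp only [desSet, mem_filter, mem_Icc] at hi ⊢
  have := columnLE_ofBurge M hi.1.1 i.lt_add_one (by omega)
  unfold ColumnLE at this
  exact ⟨hi.1, by omega⟩

lemma desSet_ofBurge_subset_sdesSet {M : Matrix (Fin p) (Fin q) ℕ} (hbin : ∀ a b, M a b ≤ 1) :
    desSet (matSize M) (ofBurge M).1 ⊆ sdesSet (matSize M) (ofBurge M).2 := by
  intro i hi
  have hle := desSet_ofBurge_subset M hi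
  simp only [desSet, sdesSet, mem_filter, mem_Icc] at hi hle ⊢
  refine ⟨hi.1, lt_of_le_of_ne hle.2 fun heq => ?_⟩
  have := columnLE_ofBurge M hi.1.1 i.lt_add_one (by omega)
  unfold ColumnLE at this
  have := ofBurge_injOn hbin ⟨hi.1.1, by omega⟩ ⟨by omega, by omega⟩
    (Prod.ext (by simp only; omega) heq.symm)
  omega

lemma sigma_mk_eq_of_apply {p' q' : ℕ} (F : ℕ → ℕ → ℕ) (hp : p' = p) (hq : q' = q)
    (h : ∀ (a : Fin p) (b : Fin q), F a b = M a b) :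
    (⟨p', q', fun a b => F a b⟩ : Σ p : ℕ, Σ q : ℕ, Matrix (Fin p) (Fin q) ℕ) = ⟨p, q, M⟩ := by
  subst hp hq
  congr
  exact funext₂ h

lemma toBurge_ofBurge {M : Matrix (Fin p) (Fin q) ℕ} (hB : IsBurge M) :
    toBurge (matSize M) (ofBurge M) = ⟨p, q, M⟩ := by
  rw [toBurge, biword_ofBurge, Multiset.sort_eq]
  exact sigma_mk_eq_of_apply M (fun a b => (entryMultiset M).count (a + 1, b + 1))
    (wmax_eq_of_image_eq (image_ofBurge_fst hB)) (wmax_eq_of_image_eq (image_ofBurge_snd hB))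
    (count_entryMultiset M)

end BurgeCorrespondence

section Counts

variable {n : ℕ}

lemma sdesSet_subset_desSet (n : ℕ) (v : ℕ → ℕ) : sdesSet n v ⊆ desSet n v :=
  monotone_filter_right _ fun _ _ => le_of_lt

lemma ncard_eq_ncard_of_toBurge {s : Set ((ℕ → ℕ) × (ℕ → ℕ))}
    {t : Set (Σ p : ℕ, Σ q : ℕ, Matrix (Fin p) (Fin q) ℕ)} (hs : s ⊆ BurPairs n)
    (ht : t ⊆ BurgeMatrices n) (hst : ∀ pr ∈ s, toBurge n pr ∈ t)
    (hts : ∀ M ∈ t, ofBurge M.2.2 ∈ s) : s.ncard = t.ncard := by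
  refine Set.ncard_congr (fun pr _ => toBurge n pr) hst (fun a b ha hb h => ?_)
    fun M hM => ⟨ofBurge M.2.2, hts M hM, ?_⟩
  · rw [← ofBurge_toBurge (hs ha), h, ofBurge_toBurge (hs hb)]
  · obtain ⟨hB, hsize⟩ := ht hM
    rw [← hsize]
    exact toBurge_ofBurge hB

lemma ncard_burPairs : (BurPairs n).ncard = (BurgeMatrices n).ncard :=
  ncard_eq_ncard_of_toBurge subset_rfl subset_rfl
    (fun _ ⟨hu, hv, _⟩ => ⟨isBurge_toBurge hu.1 hv, matSize_toBurge hu.1 hv⟩)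
    fun ⟨_, _, M⟩ ⟨hB, hsize⟩ => hsize ▸
      ⟨isWI_ofBurge_fst hB, isCayley_ofBurge_snd hB, desSet_ofBurge_subset M⟩

lemma ncard_bBurPairs : (BBurPairs n).ncard = (BinaryBurgeMatrices n).ncard :=
  ncard_eq_ncard_of_toBurge
    (fun _ ⟨hu, hv, hdes⟩ => ⟨hu, hv, hdes.trans (sdesSet_subset_desSet _ _)⟩)
    (fun _ hM => hM.1)
    (fun _ ⟨hu, hv, hdes⟩ =>
      ⟨⟨isBurge_toBurge hu.1 hv, matSize_toBurge hu.1 hv⟩, toBurge_apply_le_one hu hdes⟩)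
    fun _ ⟨⟨hB, hsize⟩, hbin⟩ => hsize ▸
      ⟨isWI_ofBurge_fst hB, isCayley_ofBurge_snd hB, desSet_ofBurge_subset_sdesSet hbin⟩

lemma ncard_pBurPairs : (PBurPairs n).ncard = (ColSumOneBurgeMatrices n).ncard :=
  ncard_eq_ncard_of_toBurge (fun _ ⟨hu, hv, hdes⟩ => ⟨hu, hv.isCayley, hdes⟩)
    (fun _ hM => hM.1)
    (fun _ ⟨hu, hv, _⟩ => by
      have hB := isBurge_toBurge hu.1 hv.isCayley
      have hsize := matSize_toBurge hu.1 hv.isCayley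
      refine ⟨⟨hB, hsize⟩, hB.matSize_eq_iff.mp ?_⟩
      rw [hsize]
      exact (wmax_eq_of_image_eq hv.2.image_eq).symm)
    fun ⟨_, q, M⟩ ⟨⟨hB, hsize⟩, hcol⟩ => by
      have hq : matSize M = q := hB.matSize_eq_iff.mpr hcol
      subst hsize
      refine ⟨isWI_ofBurge_fst hB, isPermWord_iff.mpr ⟨(isWord_ofBurge M).2, ?_⟩,
        desSet_ofBurge_subset M⟩
      rw [image_ofBurge_snd hB, hq]

lemma finsum_two_pow_des :
    ∑ᶠ v ∈ {v : ℕ → ℕ | IsCayley n v}, 2 ^ des n v = (BurPairs n).ncard :=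
  (ncard_isWI_pairs finite_isCayley (desSet n) fun v _ => desSet_subset n v).symm

lemma finsum_two_pow_sdes :
    ∑ᶠ v ∈ {v : ℕ → ℕ | IsCayley n v}, 2 ^ sdes n v = (BBurPairs n).ncard :=
  (ncard_isWI_pairs finite_isCayley (sdesSet n) fun v _ => sdesSet_subset n v).symm

lemma sum_perm_two_pow_des :
    ∑ σ : Equiv.Perm (Fin n), 2 ^ des n (permWord n σ) = (PBurPairs n).ncard := by
  rw [sum_perm_eq_finsum_isPermWord fun v => 2 ^ des n v]
  exact (ncard_isWI_pairs (finite_isCayley.subset fun _ hv => IsPermWord.isCayley hv) (desSet n)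
    fun v _ => desSet_subset n v).symm

end Counts

/-- Theorem 5.1: `C_n(2) = |Bur[n]| = |Mat[n]|`,
`C∘_n(2) = |BBur[n]| = |BMat[n]|` and `A_n(2) = |PBur[n]| = |PMat[n]|`. -/
theorem stmt6 (n : ℕ) :
    ((∑ᶠ v ∈ {v : ℕ → ℕ | IsCayley n v}, 2 ^ des n v)
        = Set.ncard (BurPairs n) ∧
      Set.ncard (BurPairs n) = Set.ncard (BurgeMatrices n)) ∧
    ((∑ᶠ v ∈ {v : ℕ → ℕ | IsCayley n v}, 2 ^ sdes n v)
        = Set.ncard (BBurPairs n) ∧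
      Set.ncard (BBurPairs n) = Set.ncard (BinaryBurgeMatrices n)) ∧
    ((∑ σ : Equiv.Perm (Fin n), 2 ^ des n (permWord n σ))
        = Set.ncard (PBurPairs n) ∧
      Set.ncard (PBurPairs n) = Set.ncard (ColSumOneBurgeMatrices n)) :=
  ⟨⟨finsum_two_pow_des, ncard_burPairs⟩, ⟨finsum_two_pow_sdes, ncard_bBurPairs⟩,
    ⟨sum_perm_two_pow_des, ncard_pBurPairs⟩⟩

end CayPaper
end
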